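/- arXiv:2102.07956 — 2 statements merged into one kernel-verified Lean document; each statement's English description precedes it below -/
import Mathlib

section
/- Let F be the (m-1)×(m-1) real matrix with entries F_{ij} = δ_{ij} w_i − ∫_X w_i w_j E_i(x) E_j(x) dμ(x), where w_i > 0, E_i : X → (0,∞) are measurable, and the normalization conditions ∑_{j=1}^m w_j E_j(x) = 1 for μ-a.e. x and ∫_X w_i E_i(x) dμ(x) = w_i hold for all i ≤ m (with m ≥ 2). Then F is symmetric and strictly diagonally dominant, hence invertible. -/
/-!
With `g i = w i * E i`, the functions `g i` are positive and sum to `1` almost everywhere,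
so the Gram matrix `G i j = ∫ g i * g j` has positive entries and row sums `∫ g i = w i`.
Hence `F` is the Laplacian `diagonal (row sums of G) - G` of the complete weighted graph `G`
with the last vertex deleted: the diagonal entry of row `i` exceeds the sum of the other
entries' moduli by the weight `G i m > 0` of the edge to the deleted vertex, and the
Levy–Desplanques theorem gives invertibility.
-/

open MeasureTheory

section IntegralGram

variable {X : Type*} [MeasurableSpace X] {μ : Measure X} {ι : Type*} {g : ι → X → ℝ}

variable (μ g) in
noncomputable def integralGram : Matrix ι ι ℝ :=
  Matrix.of fun i j => ∫ x, g i x * g j x ∂μ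

lemma integralGram_isSymm : (integralGram μ g).IsSymm := by
  ext i j
  simp only [integralGram, Matrix.transpose_apply, Matrix.of_apply, mul_comm]

lemma integral_pos_of_forall_pos {f : X → ℝ} (hμ : μ ≠ 0) (hf : ∀ x, 0 < f x)
    (hfi : Integrable f μ) : 0 < ∫ x, f x ∂μ := by
  rw [integral_pos_iff_support_of_nonneg (fun x => (hf x).le) hfi,
    Function.support_eq_univ fun x => (hf x).ne']
  exact Measure.measure_univ_pos.mpr hμ

variable [Fintype ι]

lemma ae_le_one_of_sum_eq_one (hg : ∀ i x, 0 ≤ g i x) (hsum : ∀ᵐ x ∂μ, ∑ j, g j x = 1)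
    (j : ι) : ∀ᵐ x ∂μ, g j x ≤ 1 := by
  filter_upwards [hsum] with x hx
  exact hx ▸ Finset.single_le_sum (fun k _ => hg k x) (Finset.mem_univ j)

lemma integrable_mul_of_sum_eq_one (hg : ∀ i x, 0 ≤ g i x)
    (hsum : ∀ᵐ x ∂μ, ∑ j, g j x = 1) (hint : ∀ i, Integrable (g i) μ) (i j : ι) :
    Integrable (fun x => g i x * g j x) μ := by
  refine (hint i).mono ((hint i).aestronglyMeasurable.mul (hint j).aestronglyMeasurable) ?_
  filter_upwards [ae_le_one_of_sum_eq_one hg hsum j] with x hx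
  rw [norm_mul, Real.norm_of_nonneg (hg j x)]
  exact mul_le_of_le_one_right (norm_nonneg _) hx

lemma integralGram_pos (hμ : μ ≠ 0) (hg : ∀ i x, 0 < g i x)
    (hsum : ∀ᵐ x ∂μ, ∑ j, g j x = 1) (hint : ∀ i, Integrable (g i) μ) (i j : ι) :
    0 < integralGram μ g i j :=
  integral_pos_of_forall_pos hμ (fun x => mul_pos (hg i x) (hg j x))
    (integrable_mul_of_sum_eq_one (fun i x => (hg i x).le) hsum hint i j)

lemma sum_integralGram_apply (hg : ∀ i x, 0 ≤ g i x)
    (hsum : ∀ᵐ x ∂μ, ∑ j, g j x = 1) (hint : ∀ i, Integrable (g i) μ) (i : ι) :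
    ∑ j, integralGram μ g i j = ∫ x, g i x ∂μ := by
  simp only [integralGram, Matrix.of_apply]
  rw [← integral_finsetSum _ fun j _ => integrable_mul_of_sum_eq_one hg hsum hint i j]
  refine integral_congr_ae ?_
  filter_upwards [hsum] with x hx
  rw [← Finset.mul_sum, hx, mul_one]

end IntegralGram

namespace Matrix

variable {m : ℕ} {G : Matrix (Fin (m + 1)) (Fin (m + 1)) ℝ}

/-- The Laplacian `diagonal (G *ᵥ 1) - G` of the weighted graph `G`, grounded at the
last vertex (its last row and column removed). -/
def groundedLaplacian (G : Matrix (Fin (m + 1)) (Fin (m + 1)) ℝ) :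
    Matrix (Fin m) (Fin m) ℝ :=
  of fun i j => (if i = j then ∑ k, G i.castSucc k else 0) - G i.castSucc j.castSucc

lemma groundedLaplacian_isSymm (hG : G.IsSymm) : (groundedLaplacian G).IsSymm := by
  ext i j
  by_cases h : i = j
  · subst h; rfl
  · simp [groundedLaplacian, h, Ne.symm h, hG.apply i.castSucc j.castSucc]

lemma groundedLaplacian_sum_erase_abs_lt (hG : ∀ i j, 0 ≤ G i j)
    (hlast : ∀ i, 0 < G i (Fin.last m)) (i : Fin m) :
    ∑ j ∈ Finset.univ.erase i, |groundedLaplacian G i j| < |groundedLaplacian G i i| := by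
  set S := ∑ j ∈ Finset.univ.erase i, G i.castSucc j.castSucc
  have hoff : ∑ j ∈ Finset.univ.erase i, |groundedLaplacian G i j| = S := by
    refine Finset.sum_congr rfl fun j hj => ?_
    rw [groundedLaplacian, of_apply, if_neg (Finset.ne_of_mem_erase hj).symm, zero_sub,
      abs_neg, abs_of_nonneg (hG _ _)]
  have hdiag : groundedLaplacian G i i = S + G i.castSucc (Fin.last m) := by
    rw [groundedLaplacian, of_apply, if_pos rfl, Fin.sum_univ_castSucc,
      ← Finset.add_sum_erase _ _ (Finset.mem_univ i)]
    ring
  have hS : 0 ≤ S := Finset.sum_nonneg fun j _ => hG _ _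
  have := hlast i.castSucc
  rw [hoff, hdiag, abs_of_pos (by linarith)]
  linarith

lemma isUnit_of_sum_erase_abs_lt {n : Type*} [Fintype n] [DecidableEq n]
    {A : Matrix n n ℝ} (h : ∀ i, ∑ j ∈ Finset.univ.erase i, |A i j| < |A i i|) : IsUnit A := by
  rw [isUnit_iff_isUnit_det, isUnit_iff_ne_zero]
  exact det_ne_zero_of_sum_row_lt_diag h

end Matrix

open Matrix in
theorem stmt4_general {X : Type*} [MeasurableSpace X]
    (μ : Measure X)
    (m : ℕ)
    (w : Fin (m + 1) → ℝ) (hw : ∀ i, 0 < w i)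
    (E : Fin (m + 1) → X → ℝ)
    (hEpos : ∀ i x, 0 < E i x)
    (hnorm : ∀ᵐ x ∂μ, ∑ j, w j * E j x = 1)
    (hint : ∀ i, ∫ x, E i x ∂μ = 1)
    (F : Matrix (Fin m) (Fin m) ℝ)
    (hF : ∀ i j, F i j = (if i = j then w i.castSucc else 0)
        - ∫ x, w i.castSucc * w j.castSucc * E i.castSucc x * E j.castSucc x ∂μ) :
    F.IsSymm ∧ (∀ i, ∑ j ∈ Finset.univ.erase i, |F i j| < |F i i|) ∧ IsUnit F := by
  set g : Fin (m + 1) → X → ℝ := fun i x => w i * E i x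
  have hg_pos : ∀ i x, 0 < g i x := fun i x => mul_pos (hw i) (hEpos i x)
  -- Junk values: a non-integrable `E i`, or `μ = 0`, would give `∫ E i = 0`.
  have hg_int : ∀ i, Integrable (g i) μ := fun i =>
    (Integrable.of_integral_ne_zero (by simp [hint i])).const_mul (w i)
  have hμ : μ ≠ 0 := by
    rintro rfl
    simpa using hint 0
  have hFG : F = groundedLaplacian (integralGram μ g) := by
    ext i j
    rw [hF, groundedLaplacian, of_apply,
      sum_integralGram_apply (fun i x => (hg_pos i x).le) hnorm hg_int, integral_const_mul,
      hint, mul_one]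
    congr 2 with x
    ring
  have hdom := groundedLaplacian_sum_erase_abs_lt
    (fun i j => (integralGram_pos hμ hg_pos hnorm hg_int i j).le)
    (fun i => integralGram_pos hμ hg_pos hnorm hg_int i (Fin.last m))
  subst hFG
  exact ⟨groundedLaplacian_isSymm integralGram_isSymm, hdom, isUnit_of_sum_erase_abs_lt hdom⟩

/-- The matrix `F` with `F_{ij} = δ_{ij} w_i − ∫ w_i w_j E_i E_j dμ`
(indices ranging over the first m of m+1 values, m+1 ≥ 2) is symmetric and
strictly diagonally dominant, hence invertible. -/
theorem stmt4 {X : Type*} [MeasurableSpace X]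
    (μ : Measure X) [IsProbabilityMeasure μ]
    (m : ℕ) (hm : 1 ≤ m)
    (w : Fin (m + 1) → ℝ) (hw : ∀ i, 0 < w i)
    (E : Fin (m + 1) → X → ℝ) (hE : ∀ i, Measurable (E i))
    (hEpos : ∀ i x, 0 < E i x)
    (hnorm : ∀ᵐ x ∂μ, ∑ j, w j * E j x = 1)
    (hint : ∀ i, ∫ x, E i x ∂μ = 1)
    (F : Matrix (Fin m) (Fin m) ℝ)
    (hF : ∀ i j, F i j = (if i = j then w i.castSucc else 0)
        - ∫ x, w i.castSucc * w j.castSucc * E i.castSucc x * E j.castSucc x ∂μ) :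
    F.IsSymm ∧ (∀ i, ∑ j ∈ Finset.univ.erase i, |F i j| < |F i i|) ∧ IsUnit F :=
  stmt4_general μ m w hw E hEpos hnorm hint F hF
end

section
/- Fréchet differentiability of the entropic dual in α: the functional L(α) = ∫_X α dμ − ζ ∫_X ∑_{i=1}^m w_i e^{(α(x)+β_i−g(x,y_i))/ζ} dμ(x) on L^∞(X,μ) is Fréchet differentiable at every α, with derivative the bounded linear functional h ↦ ∫_X (1 − ∑_{i=1}^m w_i E_i(x)) h(x) dμ(x), where E_i(x) = e^{(α(x)+β_i−g(x,y_i))/ζ}. -/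
/-!
The integrand factors as `K x * exp (α x / ζ)`, where
`K x = ∑ i, w i * exp ((β i - g (x, y i)) / ζ)` is continuous on the compact space `X`, hence
in `L^∞`. For `|t| ≤ 1` one has `|exp (a + t) - exp a - exp a * t| ≤ exp a * t ^ 2`; applied
at `t = h x / ζ` with `|h x| ≤ ‖h‖` a.e., it bounds the remainder of the linearisation by a
constant times `‖h‖ ^ 2`.
The derivative is continuous because it is the pairing of `L^∞` with the `L¹` function
`1 - K * exp (α / ζ)`.
-/

open MeasureTheory Real Filter Topology Asymptotics
open scoped ENNReal

theorem Real.abs_exp_add_sub_exp_sub_exp_mul_le (a : ℝ) {t : ℝ} (ht : |t| ≤ 1) :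
    |exp (a + t) - exp a - exp a * t| ≤ exp a * t ^ 2 := by
  have hfactor : exp (a + t) - exp a - exp a * t = exp a * (exp t - 1 - t) := by
    rw [exp_add]; ring
  rw [hfactor, abs_mul, abs_of_pos (exp_pos a)]
  exact mul_le_mul_of_nonneg_left (abs_exp_sub_one_sub_id_le ht) (exp_pos a).le

theorem Real.exp_mul_le_exp_abs_mul {c a b : ℝ} (ha : |a| ≤ b) :
    exp (c * a) ≤ exp (|c| * b) := by
  refine exp_le_exp.2 ((le_abs_self _).trans ?_)
  rw [abs_mul]
  exact mul_le_mul_of_nonneg_left ha (abs_nonneg c)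

namespace MeasureTheory

theorem Lp.ae_norm_le_norm_top {X E : Type*} [MeasurableSpace X]
    [NormedAddCommGroup E] {μ : Measure X} (u : Lp E ∞ μ) :
    ∀ᵐ x ∂μ, ‖u x‖ ≤ ‖u‖ := by
  simpa only [Lp.norm_def, toReal_eLpNorm (Lp.aestronglyMeasurable u)]
    using ae_le_lpNorm_exponent_top (Lp.memLp u)

variable {X : Type*} [MeasurableSpace X] {μ : Measure X}

theorem exists_continuousLinearMap_Lp_top_eq_integral_mul {f : X → ℝ} (hf : Integrable f μ) :
    ∃ D : Lp ℝ ∞ μ →L[ℝ] ℝ, ∀ h : Lp ℝ ∞ μ, D h = ∫ x, f x * h x ∂μ :=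
  ⟨(ContinuousLinearMap.mul ℝ ℝ).lpPairing μ 1 ∞ (hf.toL1 f), fun h => by
    rw [ContinuousLinearMap.lpPairing_eq_integral]
    refine integral_congr_ae ?_
    filter_upwards [hf.coeFn_toL1] with x hx
    simp only [ContinuousLinearMap.mul_apply', hx]⟩

theorem Lp.memLp_top_exp_mul (c : ℝ) (u : Lp ℝ ∞ μ) :
    MemLp (fun x => exp (c * u x)) ∞ μ := by
  refine memLp_top_of_bound
    (continuous_exp.comp_aestronglyMeasurable ((Lp.aestronglyMeasurable u).const_mul c))
    (exp (|c| * ‖u‖)) ?_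
  filter_upwards [Lp.ae_norm_le_norm_top u] with x hx
  rw [norm_of_nonneg (exp_pos _).le]
  exact exp_mul_le_exp_abs_mul hx

variable [IsFiniteMeasure μ]

theorem MemLp.integrable_mul_exp_mul {K : X → ℝ} (hK : MemLp K ∞ μ) (c : ℝ)
    (u : Lp ℝ ∞ μ) :
    Integrable (fun x => K x * exp (c * u x)) μ :=
  (hK.integrable le_top).mul_of_top_left (Lp.memLp_top_exp_mul c u)

theorem norm_integral_mul_exp_mul_sub_le {K : X → ℝ} (hK : MemLp K ∞ μ) {c : ℝ}
    (α h : Lp ℝ ∞ μ) (hh : |c| * ‖h‖ ≤ 1) :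
    ‖∫ x, K x * exp (c * (α + h) x) ∂μ - ∫ x, K x * exp (c * α x) ∂μ
        - ∫ x, c * K x * exp (c * α x) * h x ∂μ‖
      ≤ lpNorm K ∞ μ * exp (|c| * ‖α‖) * c ^ 2 * μ.real Set.univ * ‖h‖ ^ 2 := by
  have hKh : Integrable (fun x => c * K x * exp (c * α x) * h x) μ := by
    simpa only [Pi.mul_apply, mul_assoc] using
      ((hK.integrable_mul_exp_mul c α).mul_of_top_left (Lp.memLp h)).const_mul c
  have hcombine : ∫ x, K x * exp (c * (α + h) x) ∂μ - ∫ x, K x * exp (c * α x) ∂μ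
        - ∫ x, c * K x * exp (c * α x) * h x ∂μ
      = ∫ x, (K x * exp (c * (α + h) x) - K x * exp (c * α x)
        - c * K x * exp (c * α x) * h x) ∂μ := by
    have hdiff : Integrable (fun x => K x * exp (c * (α + h) x) - K x * exp (c * α x)) μ :=
      (hK.integrable_mul_exp_mul c _).sub (hK.integrable_mul_exp_mul c α)
    rw [integral_sub hdiff hKh,
      integral_sub (hK.integrable_mul_exp_mul c _) (hK.integrable_mul_exp_mul c α)]
  rw [hcombine]
  refine (norm_integral_le_of_norm_le_const
    (C := lpNorm K ∞ μ * exp (|c| * ‖α‖) * c ^ 2 * ‖h‖ ^ 2) ?_).trans_eq (by ring)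
  filter_upwards [ae_le_lpNorm_exponent_top hK, Lp.ae_norm_le_norm_top α,
    Lp.ae_norm_le_norm_top h, Lp.coeFn_add α h] with x hKx hαx hhx hadd
  have hch : |c * h x| ≤ |c| * ‖h‖ := by
    rw [abs_mul]; exact mul_le_mul_of_nonneg_left hhx (abs_nonneg c)
  have htaylor := abs_exp_add_sub_exp_sub_exp_mul_le (c * α x) (hch.trans hh)
  have hsq : (c * h x) ^ 2 ≤ c ^ 2 * ‖h‖ ^ 2 :=
    calc (c * h x) ^ 2 = |c * h x| ^ 2 := (sq_abs _).symm
      _ ≤ (|c| * ‖h‖) ^ 2 := pow_le_pow_left₀ (abs_nonneg _) hch 2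
      _ = c ^ 2 * ‖h‖ ^ 2 := by rw [mul_pow, sq_abs]
  calc ‖K x * exp (c * (α + h) x) - K x * exp (c * α x) - c * K x * exp (c * α x) * h x‖
      = ‖K x‖ * |exp (c * α x + c * h x) - exp (c * α x) - exp (c * α x) * (c * h x)| := by
        rw [hadd, Pi.add_apply, norm_eq_abs, norm_eq_abs, ← abs_mul]; ring_nf
    _ ≤ lpNorm K ∞ μ * (exp (|c| * ‖α‖) * (c ^ 2 * ‖h‖ ^ 2)) := by
        refine mul_le_mul hKx (htaylor.trans ?_) (abs_nonneg _) lpNorm_nonneg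
        exact mul_le_mul (exp_mul_le_exp_abs_mul hαx) hsq (sq_nonneg _) (exp_pos _).le
    _ = lpNorm K ∞ μ * exp (|c| * ‖α‖) * c ^ 2 * ‖h‖ ^ 2 := by ring

theorem hasFDerivAt_integral_mul_exp_mul {K : X → ℝ} (hK : MemLp K ∞ μ) (c : ℝ)
    (α : Lp ℝ ∞ μ) :
    ∃ D : Lp ℝ ∞ μ →L[ℝ] ℝ,
      HasFDerivAt (fun α : Lp ℝ ∞ μ => ∫ x, K x * exp (c * α x) ∂μ) D α ∧
      ∀ h, D h = ∫ x, c * K x * exp (c * α x) * h x ∂μ := by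
  obtain ⟨D, hD⟩ := exists_continuousLinearMap_Lp_top_eq_integral_mul
    (f := fun x => c * K x * exp (c * α x))
    (by simpa only [mul_assoc] using (hK.integrable_mul_exp_mul c α).const_mul c)
  refine ⟨D, ?_, hD⟩
  rw [hasFDerivAt_iff_isLittleO_nhds_zero]
  refine IsBigO.trans_isLittleO ?_ (isLittleO_norm_pow_id one_lt_two)
  have hsmall : ∀ᶠ h : Lp ℝ ∞ μ in 𝓝 0, |c| * ‖h‖ < 1 :=
    (continuous_const.mul continuous_norm).continuousAt.eventually_lt continuousAt_const
      (by simp)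
  refine IsBigO.of_bound (lpNorm K ∞ μ * exp (|c| * ‖α‖) * c ^ 2 * μ.real Set.univ)
    (hsmall.mono fun h hh => ?_)
  rw [norm_pow, norm_norm, hD h]
  exact norm_integral_mul_exp_mul_sub_le hK α h hh.le

end MeasureTheory

theorem stmt8_general {X : Type*} [MetricSpace X] [CompactSpace X]
    [MeasurableSpace X] [BorelSpace X]
    (μ : Measure X) [IsProbabilityMeasure μ]
    (g : X × X → ℝ) (hg : Continuous g)
    (m : ℕ) (y : Fin m → X) (β : Fin m → ℝ)
    (w : Fin m → ℝ)
    (ζ : ℝ) (hζ : 0 < ζ)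
    (L : Lp ℝ ⊤ μ → ℝ)
    (hL : ∀ α : Lp ℝ ⊤ μ,
      L α = ∫ x, α x ∂μ
        - ζ * ∫ x, ∑ i, w i * exp ((α x + β i - g (x, y i)) / ζ) ∂μ)
    (α : Lp ℝ ⊤ μ) :
    ∃ D : Lp ℝ ⊤ μ →L[ℝ] ℝ, HasFDerivAt L D α ∧
      ∀ h : Lp ℝ ⊤ μ,
        D h = ∫ x, (1 - ∑ i, w i * exp ((α x + β i - g (x, y i)) / ζ)) * h x ∂μ := by
  set K : X → ℝ := fun x => ∑ i, w i * exp ((β i - g (x, y i)) / ζ)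
  have hK : MemLp K ∞ μ :=
    (by fun_prop : Continuous K).memLp_top_of_hasCompactSupport
      (HasCompactSupport.of_compactSpace K) μ
  have hfactor :
      ∀ x a, ∑ i, w i * exp ((a + β i - g (x, y i)) / ζ) = K x * exp (ζ⁻¹ * a) :=
    fun x a => by
      simp only [K, Finset.sum_mul, mul_assoc, ← exp_add]
      congr! 3; ring
  obtain ⟨I, hI⟩ := exists_continuousLinearMap_Lp_top_eq_integral_mul
    (integrable_const 1 : Integrable (fun _ => (1 : ℝ)) μ)
  obtain ⟨E, hE, hE_apply⟩ := hasFDerivAt_integral_mul_exp_mul hK ζ⁻¹ α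
  have hL_eq : L = fun α => I α - ζ * ∫ x, K x * exp (ζ⁻¹ * α x) ∂μ :=
    funext fun α => by simp only [hL, hI, one_mul, hfactor]
  refine ⟨I - ζ • E, hL_eq ▸ I.hasFDerivAt.sub (hE.const_smul ζ), fun h => ?_⟩
  have hEh : Integrable (fun x => K x * exp (ζ⁻¹ * α x) * h x) μ :=
    (hK.integrable_mul_exp_mul ζ⁻¹ α).mul_of_top_left (Lp.memLp h)
  simp only [sub_apply, smul_apply, smul_eq_mul, hI,
    hE_apply, hfactor, ← integral_const_mul, sub_mul, one_mul]
  rw [integral_sub ((Lp.memLp h).integrable le_top) hEh]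
  congr 1
  refine integral_congr_ae (ae_of_all _ fun x => ?_)
  field_simp

/-- Fréchet differentiability of the entropic dual functional in `α ∈ L^∞(X,μ)`,
with derivative `h ↦ ∫ (1 − ∑ᵢ wᵢ Eᵢ) h dμ`. -/
theorem stmt8 {X : Type*} [MetricSpace X] [CompactSpace X]
    [MeasurableSpace X] [BorelSpace X]
    (μ : Measure X) [IsProbabilityMeasure μ]
    (g : X × X → ℝ) (hg : Continuous g)
    (m : ℕ) (y : Fin m → X) (β : Fin m → ℝ)
    (w : Fin m → ℝ) (hw : ∀ i, 0 < w i) (hw1 : ∑ i, w i = 1)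
    (ζ : ℝ) (hζ : 0 < ζ)
    (L : Lp ℝ ⊤ μ → ℝ)
    (hL : ∀ α : Lp ℝ ⊤ μ,
      L α = ∫ x, α x ∂μ
        - ζ * ∫ x, ∑ i, w i * exp ((α x + β i - g (x, y i)) / ζ) ∂μ)
    (α : Lp ℝ ⊤ μ) :
    ∃ D : Lp ℝ ⊤ μ →L[ℝ] ℝ, HasFDerivAt L D α ∧
      ∀ h : Lp ℝ ⊤ μ,
        D h = ∫ x, (1 - ∑ i, w i * exp ((α x + β i - g (x, y i)) / ζ)) * h x ∂μ :=
  stmt8_general μ g hg m y β w ζ hζ L hL α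
end
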